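/- arXiv:2407.10455 — 6 statements merged into one kernel-verified Lean document; each statement's English description precedes it below -/
import Mathlib

section
/- The absolute convex hull of an L-weakly compact subset of a Banach lattice is L-weakly compact. -/
open Filter Topology Metric Set

/-- A pairwise disjoint sequence in a Banach lattice. -/
def DisjSeq {E : Type*} [NormedAddCommGroup E] [Lattice E] [HasSolidNorm E] [IsOrderedAddMonoid E] (x : ℕ → E) : Prop :=
  ∀ n m, n ≠ m → |x n| ⊓ |x m| = 0

/-- The solid hull of a set. -/
def solidHull {E : Type*} [NormedAddCommGroup E] [Lattice E] [HasSolidNorm E] [IsOrderedAddMonoid E] (A : Set E) : Set E :=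
  {x | ∃ a ∈ A, |x| ≤ |a|}

/-- A set is L-weakly compact if it is norm bounded and every disjoint
sequence in its solid hull is norm null. -/
def IsLwcSet {E : Type*} [NormedAddCommGroup E] [Lattice E] [HasSolidNorm E] [IsOrderedAddMonoid E] (A : Set E) : Prop :=
  Bornology.IsBounded A ∧
    ∀ x : ℕ → E, (∀ n, x n ∈ solidHull A) → DisjSeq x →
      Tendsto (fun n => ‖x n‖) atTop (𝓝 0)

/-- The absolute convex hull of a set. -/
def absco {V : Type*} [AddCommGroup V] [Module ℝ V] (A : Set V) : Set V :=
  {x | ∃ (m : ℕ) (α : Fin m → ℝ) (a : Fin m → V),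
    (∑ k, |α k|) ≤ 1 ∧ (∀ k, a k ∈ A) ∧ x = ∑ k, α k • a k}

section Aux

variable {E : Type*} [NormedAddCommGroup E] [Lattice E] [HasSolidNorm E] [IsOrderedAddMonoid E] [NormedSpace ℝ E]

private lemma pow2_semiclosed : ∀ (k : ℕ) {a : E}, 0 ≤ (2 ^ k) • a → 0 ≤ a := by
  intro k
  induction k with
  | zero => intro a h; simpa using h
  | succ k ih =>
    intro a h
    have h' : (0:E) ≤ 2 ^ k • (2 • a) := by
      rw [← mul_smul, ← pow_succ]
      exact h

    exact nsmul_two_semiclosed (ih h')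

/-- Positivity of scalar multiplication by nonnegative reals, derived from the
closedness of the positive cone and dyadic approximation. -/
private lemma lat_smul_nonneg {c : ℝ} (hc : 0 ≤ c) {v : E} (hv : 0 ≤ v) : 0 ≤ c • v := by
  -- dyadic approximations from above
  set f : ℕ → ℝ := fun k => (⌈c * 2 ^ k⌉₊ : ℝ) / 2 ^ k with hf
  have hmem : ∀ k, (0:E) ≤ f k • v := by
    intro k
    apply pow2_semiclosed k
    have h2 : (2 ^ k : ℕ) • (f k • v) = (⌈c * 2 ^ k⌉₊ : ℕ) • v := by
      rw [← Nat.cast_smul_eq_nsmul ℝ (2 ^ k), ← Nat.cast_smul_eq_nsmul ℝ (⌈c * 2 ^ k⌉₊),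
        smul_smul]
      congr 1
      have h2k : (2:ℝ) ^ k ≠ 0 := by positivity
      push_cast
      simp only [hf]
      field_simp
    rw [h2]
    exact nsmul_nonneg hv _
  have hle : ∀ k, c ≤ f k := by
    intro k
    rw [hf]
    rw [le_div_iff₀ (by positivity)]
    exact Nat.le_ceil _
  have hub : ∀ k, f k ≤ c + (1/2) ^ k := by
    intro k
    rw [hf]
    rw [div_le_iff₀ (by positivity)]
    have : (⌈c * 2 ^ k⌉₊ : ℝ) < c * 2 ^ k + 1 :=
      Nat.ceil_lt_add_one (by positivity)
    calc (⌈c * 2 ^ k⌉₊ : ℝ) ≤ c * 2 ^ k + 1 := this.le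
      _ = (c + (1/2) ^ k) * 2 ^ k := by
          rw [add_mul, ← mul_pow]; norm_num
  have hlim : Tendsto f atTop (𝓝 c) := by
    have h1 : Tendsto (fun k : ℕ => c + (1/2 : ℝ) ^ k) atTop (𝓝 (c + 0)) :=
      tendsto_const_nhds.add (tendsto_pow_atTop_nhds_zero_of_lt_one (by norm_num) (by norm_num))
    rw [add_zero] at h1
    exact tendsto_of_tendsto_of_tendsto_of_le_of_le tendsto_const_nhds h1 hle hub
  have hlim2 : Tendsto (fun k => f k • v) atTop (𝓝 (c • v)) := hlim.smul_const v
  exact isClosed_nonneg.mem_of_tendsto hlim2 (Eventually.of_forall hmem)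

private lemma lat_smul_le_smul {c : ℝ} (hc : 0 ≤ c) {v w : E} (h : v ≤ w) :
    c • v ≤ c • w := by
  have := lat_smul_nonneg hc (sub_nonneg.2 h)
  rw [smul_sub] at this
  exact sub_nonneg.1 this

private lemma lat_inf_smul_le {c : ℝ} (hc : 0 < c) (a b : E) :
    (c • a) ⊓ (c • b) ≤ c • (a ⊓ b) := by
  have h1 : c⁻¹ • ((c • a) ⊓ (c • b)) ≤ a ⊓ b := by
    apply le_inf
    · have := lat_smul_le_smul (inv_pos.2 hc).le (inf_le_left (a := c • a) (b := c • b))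
      rwa [inv_smul_smul₀ hc.ne'] at this
    · have := lat_smul_le_smul (inv_pos.2 hc).le (inf_le_right (a := c • a) (b := c • b))
      rwa [inv_smul_smul₀ hc.ne'] at this
  have := lat_smul_le_smul hc.le h1
  rwa [smul_inv_smul₀ hc.ne'] at this

private lemma lat_smul_le_abs (c : ℝ) (v : E) : c • v ≤ |c| • |v| := by
  rcases le_total 0 c with hc | hc
  · rw [abs_of_nonneg hc]
    exact lat_smul_le_smul hc (le_abs_self v)
  · rw [abs_of_nonpos hc]
    have h : (-c) • (-v) = c • v := by simp
    rw [← h]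
    exact lat_smul_le_smul (neg_nonneg.2 hc) (neg_le_abs v)

private lemma lat_abs_smul_le (c : ℝ) (v : E) : |c • v| ≤ |c| • |v| := by
  refine abs_le'.2 ⟨lat_smul_le_abs c v, ?_⟩
  have := lat_smul_le_abs (-c) v
  rwa [neg_smul, abs_neg] at this

private lemma lat_abs_sum_le {ι : Type*} (s : Finset ι) (f : ι → E) :
    |∑ k ∈ s, f k| ≤ ∑ k ∈ s, |f k| := by
  induction s using Finset.cons_induction with
  | empty => simp
  | cons a s ha ih =>
    rw [Finset.sum_cons, Finset.sum_cons]
    exact (abs_add_le _ _).trans (add_le_add le_rfl ih)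

/-- Riesz decomposition for finite sums. -/
private lemma riesz_decomp {ι : Type*} (s : Finset ι) (v : ι → E) :
    ∀ x : E, 0 ≤ x → x ≤ ∑ k ∈ s, v k → (∀ k ∈ s, 0 ≤ v k) →
      ∃ y : ι → E, (∀ k ∈ s, 0 ≤ y k ∧ y k ≤ v k) ∧ x = ∑ k ∈ s, y k := by
  classical
  induction s using Finset.induction_on with
  | empty =>
    intro x hx hxs _
    simp only [Finset.sum_empty] at hxs ⊢
    exact ⟨0, by simp, le_antisymm hxs hx⟩
  | @insert a s ha ih =>
    intro x hx hxs hv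
    rw [Finset.sum_insert ha] at hxs
    set y0 := x ⊓ v a with hy0def
    have hva : 0 ≤ v a := hv a (Finset.mem_insert_self a s)
    have h0 : 0 ≤ y0 := le_inf hx hva
    have hy0 : y0 ≤ v a := inf_le_right
    have hz : 0 ≤ x - y0 := sub_nonneg.2 inf_le_left
    have hsumpos : (0:E) ≤ ∑ k ∈ s, v k :=
      Finset.sum_nonneg fun k hk => hv k (Finset.mem_insert_of_mem hk)
    have hz2 : x - y0 ≤ ∑ k ∈ s, v k := by
      rw [sub_le_iff_le_add, hy0def, add_inf]
      refine le_inf ?_ ?_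
      · exact le_add_of_nonneg_left hsumpos
      · simpa [add_comm] using hxs
    obtain ⟨y, hy, hsum⟩ := ih (x - y0) hz hz2 fun k hk => hv k (Finset.mem_insert_of_mem hk)
    refine ⟨Function.update y a y0, ?_, ?_⟩
    · intro k hk
      rcases Finset.mem_insert.1 hk with rfl | hk'
      · rw [Function.update_self]; exact ⟨h0, hy0⟩
      · rw [Function.update_of_ne (fun h : k = a => ha (h ▸ hk'))]
        exact hy k hk'
    · rw [Finset.sum_insert ha, Function.update_self]
      have : ∑ k ∈ s, Function.update y a y0 k = ∑ k ∈ s, y k :=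
        Finset.sum_congr rfl fun k hk =>
          Function.update_of_ne (fun h : k = a => ha (h ▸ hk)) _ _
      rw [this, ← hsum]
      abel

private lemma lat_abs_eq_zero {a : E} (h : |a| = 0) : a = 0 := by
  have h1 : a ≤ 0 := (le_abs_self a).trans h.le
  have h2 : -a ≤ 0 := (neg_le_abs a).trans h.le
  exact le_antisymm h1 (by simpa using h2)

/-- The key pointwise estimate: every element of the solid hull of `absco A`
is norm-dominated by a positive element of the solid hull of `A` which is moreover
dominated by a multiple of `|w|`. -/
private lemma key_estimate (A : Set E) {a0 : E} (ha0 : a0 ∈ A) {w : E}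
    (hw : w ∈ solidHull (absco A)) :
    ∃ z : E, z ∈ solidHull A ∧ 0 ≤ z ∧ ‖w‖ ≤ ‖z‖ ∧ ∃ c : ℝ, z ≤ c • |w| := by
  classical
  obtain ⟨b, hb, hwb⟩ := hw
  obtain ⟨m, α, a, hα, haA, rfl⟩ := hb
  have h1 : |w| ≤ ∑ k, |α k| • |a k| := by
    refine hwb.trans ((lat_abs_sum_le _ _).trans ?_)
    exact Finset.sum_le_sum fun k _ => lat_abs_smul_le (α k) (a k)
  obtain ⟨y, hy, hsum⟩ := riesz_decomp Finset.univ (fun k => |α k| • |a k|) |w|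
    (abs_nonneg w) h1 (fun k _ => lat_smul_nonneg (abs_nonneg _) (abs_nonneg _))
  set T : Finset (Fin m) := Finset.univ.filter (fun k => 0 < |α k|) with hT
  have hy0 : ∀ k ∉ T, y k = 0 := by
    intro k hk
    have hαk : |α k| = 0 := by
      by_contra h
      exact hk (Finset.mem_filter.2 ⟨Finset.mem_univ k, (abs_nonneg (α k)).lt_of_ne (Ne.symm h)⟩)
    have := (hy k (Finset.mem_univ k)).2
    rw [hαk, zero_smul] at this
    exact le_antisymm this (hy k (Finset.mem_univ k)).1
  rcases T.eq_empty_or_nonempty with hTe | hTne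
  · -- all coefficients vanish, so w = 0
    have hw0 : |w| = 0 := by
      rw [hsum]
      refine Finset.sum_eq_zero fun k _ => hy0 k ?_
      rw [hTe]; exact Finset.notMem_empty k
    have : w = 0 := lat_abs_eq_zero hw0
    refine ⟨0, ⟨a0, ha0, by simpa using abs_nonneg a0⟩, le_refl 0, ?_, 1, ?_⟩
    · simp [this]
    · simp [abs_nonneg]
  · obtain ⟨k0, hk0T, hk0max⟩ := T.exists_max_image (fun k => ‖(|α k|)⁻¹ • y k‖) hTne
    have hαk0 : 0 < |α k0| := (Finset.mem_filter.1 hk0T).2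
    set z := (|α k0|)⁻¹ • y k0 with hz
    have hz0 : 0 ≤ z := lat_smul_nonneg (by positivity) (hy k0 (Finset.mem_univ k0)).1
    have hzle : z ≤ |a k0| := by
      have := lat_smul_le_smul (c := (|α k0|)⁻¹) (by positivity)
        (hy k0 (Finset.mem_univ k0)).2
      rwa [inv_smul_smul₀ hαk0.ne'] at this
    refine ⟨z, ⟨a k0, haA k0, ?_⟩, hz0, ?_, (|α k0|)⁻¹, ?_⟩
    · rw [abs_of_nonneg hz0]
      exact hzle
    · -- norm estimate
      have hyk : ∀ k, ‖y k‖ ≤ |α k| * ‖z‖ := by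
        intro k
        by_cases hk : k ∈ T
        · have hαk : 0 < |α k| := (Finset.mem_filter.1 hk).2
          have hrw : y k = |α k| • ((|α k|)⁻¹ • y k) := (smul_inv_smul₀ hαk.ne' _).symm
          rw [hrw, norm_smul, Real.norm_eq_abs, abs_abs]
          exact mul_le_mul_of_nonneg_left (hk0max k hk) hαk.le
        · rw [hy0 k hk, norm_zero]
          positivity
      calc ‖w‖ = ‖|w|‖ := (norm_abs_eq_norm w).symm
        _ = ‖∑ k, y k‖ := by rw [hsum]
        _ ≤ ∑ k, ‖y k‖ := norm_sum_le _ _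
        _ ≤ ∑ k, |α k| * ‖z‖ := Finset.sum_le_sum fun k _ => hyk k
        _ = (∑ k, |α k|) * ‖z‖ := (Finset.sum_mul ..).symm
        _ ≤ 1 * ‖z‖ := mul_le_mul_of_nonneg_right hα (norm_nonneg z)
        _ = ‖z‖ := one_mul _
    · -- domination by a multiple of |w|
      have hle : y k0 ≤ |w| := by
        rw [hsum]
        exact Finset.single_le_sum (fun k _ => (hy k (Finset.mem_univ k)).1)
          (Finset.mem_univ k0)
      exact lat_smul_le_smul (by positivity) hle

end Aux

/-- The absolute convex hull of an L-weakly compact subset of a Banach lattice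
is L-weakly compact. -/
theorem absco_isLwcSet {E : Type*} [NormedAddCommGroup E] [Lattice E] [HasSolidNorm E] [IsOrderedAddMonoid E] [NormedSpace ℝ E]
    [CompleteSpace E] (A : Set E) (hA : IsLwcSet A) :
    IsLwcSet (absco A) := by
  obtain ⟨hbdd, hdisj⟩ := hA
  constructor
  · -- boundedness of absco A
    obtain ⟨M, hM⟩ := isBounded_iff_forall_norm_le.1 hbdd
    refine isBounded_iff_forall_norm_le.2 ⟨max M 0, ?_⟩
    rintro x ⟨m, α, a, hα, haA, rfl⟩
    calc ‖∑ k, α k • a k‖ ≤ ∑ k, ‖α k • a k‖ := norm_sum_le _ _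
      _ = ∑ k, |α k| * ‖a k‖ := by
          refine Finset.sum_congr rfl fun k _ => ?_
          rw [norm_smul, Real.norm_eq_abs]
      _ ≤ ∑ k, |α k| * max M 0 := by
          refine Finset.sum_le_sum fun k _ => ?_
          exact mul_le_mul_of_nonneg_left ((hM _ (haA k)).trans (le_max_left M 0))
            (abs_nonneg _)
      _ = (∑ k, |α k|) * max M 0 := (Finset.sum_mul ..).symm
      _ ≤ 1 * max M 0 := mul_le_mul_of_nonneg_right hα (le_max_right M 0)
      _ = max M 0 := one_mul _
  · intro x hx hd
    rcases A.eq_empty_or_nonempty with rfl | ⟨a0, ha0⟩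
    · -- A is empty: every element of solidHull (absco ∅) is 0
      have hx0 : ∀ n, x n = 0 := by
        intro n
        obtain ⟨b, hb, hxb⟩ := hx n
        obtain ⟨m, α, a, hα, haA, rfl⟩ := hb
        have hb0 : ∑ k, α k • a k = 0 :=
          Finset.sum_eq_zero fun k _ => absurd (haA k) (Set.notMem_empty _)
        rw [hb0] at hxb
        simp only [abs_zero] at hxb
        exact lat_abs_eq_zero (le_antisymm hxb (abs_nonneg _))
      simp only [hx0, norm_zero]
      exact tendsto_const_nhds
    · choose z hz1 hz2 hz3 c hc using fun n => key_estimate A ha0 (hx n)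
      refine squeeze_zero (fun n => norm_nonneg _) hz3 ?_
      refine hdisj z hz1 ?_
      intro n m hnm
      set C : ℝ := max (max (c n) (c m)) 1 with hC
      have hCpos : 0 < C := lt_of_lt_of_le one_pos (le_max_right _ _)
      have hbnd : ∀ j, c j ≤ C → z j ≤ C • |x j| := by
        intro j hj
        refine (hc j).trans ?_
        have h := lat_smul_nonneg (sub_nonneg.2 hj) (abs_nonneg (x j))
        rw [sub_smul] at h
        exact sub_nonneg.1 h
      have h1 : |z n| ⊓ |z m| ≤ C • (|x n| ⊓ |x m|) := by
        rw [abs_of_nonneg (hz2 n), abs_of_nonneg (hz2 m)]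
        refine le_trans (inf_le_inf ?_ ?_) (lat_inf_smul_le hCpos _ _)
        · exact hbnd n ((le_max_left _ _).trans (le_max_left _ _))
        · exact hbnd m ((le_max_right _ _).trans (le_max_left _ _))
      rw [hd n m hnm, smul_zero] at h1
      exact le_antisymm h1 (le_inf (abs_nonneg _) (abs_nonneg _))
end

section
/- Every totally bounded set of weakly compact operators between Banach spaces X and Y is collectively weakly compact, i.e., ⋃_{T∈𝒯} T(B_X) is relatively weakly compact in Y. -/
open Filter Topology Metric Set
open Pointwise

/-- A set is relatively weakly compact if its closure in the weak topology is compact. -/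
def RelWeaklyCompact {Y : Type*} [NormedAddCommGroup Y] [NormedSpace ℝ Y] (A : Set Y) : Prop :=
  IsCompact (closure ((toWeakSpaceCLM ℝ Y) '' A))

/-- Every totally bounded set of weakly compact operators is collectively
weakly compact. -/
theorem totallyBounded_collectivelyWeaklyCompact {X Y : Type*}
    [NormedAddCommGroup X] [NormedSpace ℝ X] [CompleteSpace X]
    [NormedAddCommGroup Y] [NormedSpace ℝ Y] [CompleteSpace Y]
    (𝒯 : Set (X →L[ℝ] Y)) (htb : TotallyBounded 𝒯)
    (hwc : ∀ T ∈ 𝒯, RelWeaklyCompact (T '' Metric.closedBall (0 : X) 1)) :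
    RelWeaklyCompact (⋃ T ∈ 𝒯, T '' Metric.closedBall (0 : X) 1) := by
  classical
  rcases 𝒯.eq_empty_or_nonempty with rfl | ⟨T₀, hT₀⟩
  · simp [RelWeaklyCompact]
  set B : Set X := Metric.closedBall (0 : X) 1 with hBdef
  set A : Set Y := ⋃ T ∈ 𝒯, T '' B with hAdef
  set ev : (Y →L[ℝ] ℝ) → WeakSpace ℝ Y → ℝ :=
    fun φ x => φ ((toWeakSpace ℝ Y).symm x) with hevdef
  have hevc : ∀ φ, Continuous (ev φ) := fun φ =>
    WeakBilin.eval_continuous ((topDualPairing ℝ Y).flip) φ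
  -- a uniform bound on A
  obtain ⟨M, hM⟩ : ∃ M, ∀ T ∈ 𝒯, ‖T‖ ≤ M :=
    isBounded_iff_forall_norm_le.1 htb.isBounded
  have hM0 : 0 ≤ M := le_trans (norm_nonneg T₀) (hM T₀ hT₀)
  have hAbound : ∀ a ∈ A, ‖a‖ ≤ M := by
    rintro a ha
    simp only [hAdef, mem_iUnion] at ha
    obtain ⟨T, hT, x, hx, rfl⟩ := ha
    calc ‖T x‖ ≤ ‖T‖ * ‖x‖ := T.le_opNorm x
    _ ≤ M * 1 := by
        refine mul_le_mul (hM T hT) ?_ (norm_nonneg x) hM0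
        simpa using mem_closedBall_zero_iff.1 hx
    _ = M := mul_one M
  have hbound : ∀ (φ : Y →L[ℝ] ℝ) (x : WeakSpace ℝ Y),
      x ∈ closure ((toWeakSpaceCLM ℝ Y) '' A) → |ev φ x| ≤ M * ‖φ‖ := by
    intro φ
    have hcl : IsClosed {x : WeakSpace ℝ Y | |ev φ x| ≤ M * ‖φ‖} :=
      isClosed_le (continuous_abs.comp (hevc φ)) continuous_const
    intro x hx
    refine closure_minimal ?_ hcl hx
    rintro - ⟨a, ha, rfl⟩
    have : |φ a| ≤ ‖φ‖ * ‖a‖ := by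
      simpa [Real.norm_eq_abs] using φ.le_opNorm a
    calc |ev φ (toWeakSpaceCLM ℝ Y a)| = |φ a| := rfl
    _ ≤ ‖φ‖ * ‖a‖ := this
    _ ≤ ‖φ‖ * M := by
        exact mul_le_mul_of_nonneg_left (hAbound a ha) (norm_nonneg φ)
    _ = M * ‖φ‖ := mul_comm _ _
  rw [RelWeaklyCompact, isCompact_iff_ultrafilter_le_nhds]
  intro 𝒰 h𝒰
  have hclmem : closure ((toWeakSpaceCLM ℝ Y) '' A) ∈ 𝒰 := le_principal_iff.1 h𝒰
  -- limit functional along the ultrafilter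
  have hlim : ∀ φ : Y →L[ℝ] ℝ, ∃ c, Tendsto (ev φ) (↑𝒰) (𝓝 c) := by
    intro φ
    have h1 : Set.Icc (-(M * ‖φ‖)) (M * ‖φ‖) ∈ 𝒰.map (ev φ) := by
      refine mem_map.2 (mem_of_superset hclmem fun x hx => ?_)
      have h2 := abs_le.1 (hbound φ x hx)
      exact ⟨h2.1, h2.2⟩
    obtain ⟨c, -, hc⟩ := isCompact_Icc.ultrafilter_le_nhds (𝒰.map (ev φ)) (le_principal_iff.2 h1)
    exact ⟨c, hc⟩
  choose Λ hΛ using hlim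
  -- approximation by points of Y
  have happrox : ∀ ε : ℝ, 0 < ε → ∃ y : Y, ∀ φ : Y →L[ℝ] ℝ, |Λ φ - φ y| ≤ ε * ‖φ‖ := by
    intro ε hε
    obtain ⟨t, hts, htf, hcover⟩ := totallyBounded_iff_subset.1 htb _ (dist_mem_uniformity hε)
    have hAsub : A ⊆ ⋃ S ∈ t, (S '' B + Metric.closedBall (0 : Y) ε) := by
      rintro a ha
      simp only [hAdef, mem_iUnion] at ha
      obtain ⟨T, hT, x, hx, rfl⟩ := ha
      obtain ⟨S, hS, hdist⟩ : ∃ S ∈ t, dist T S < ε := by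
        have := hcover hT
        simp only [mem_iUnion, mem_setOf_eq] at this
        obtain ⟨S, hS, h⟩ := this
        exact ⟨S, hS, h⟩
      refine mem_iUnion₂.2 ⟨S, hS, ?_⟩
      refine Set.mem_add.2 ⟨S x, ⟨x, hx, rfl⟩, T x - S x, ?_, by abel⟩
      rw [mem_closedBall_zero_iff]
      have h1 : T x - S x = (T - S) x := by simp
      rw [h1]
      calc ‖(T - S) x‖ ≤ ‖T - S‖ * ‖x‖ := (T - S).le_opNorm x
      _ ≤ ε * 1 := by
          refine mul_le_mul ?_ ?_ (norm_nonneg x) hε.le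
          · rw [← dist_eq_norm]; exact hdist.le
          · simpa using mem_closedBall_zero_iff.1 hx
      _ = ε := mul_one ε
    have hsub2 : closure ((toWeakSpaceCLM ℝ Y) '' A) ⊆
        ⋃ S ∈ t, closure ((toWeakSpaceCLM ℝ Y) '' (S '' B + Metric.closedBall (0 : Y) ε)) := by
      rw [← htf.closure_biUnion]
      apply closure_mono
      rw [← image_iUnion₂]
      exact image_mono hAsub
    obtain ⟨S, hSt, hSmem⟩ := (Ultrafilter.finite_biUnion_mem_iff htf).1
      (Filter.mem_of_superset hclmem hsub2)
    set K : Set (WeakSpace ℝ Y) := closure ((toWeakSpaceCLM ℝ Y) '' (S '' B)) with hKdef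
    have hK : IsCompact K := hwc S (hts hSt)
    set C : Set (WeakSpace ℝ Y) := (toWeakSpaceCLM ℝ Y) '' Metric.closedBall (0 : Y) ε with hCdef
    have hCc : IsClosed C := by
      have h1 := (convex_closedBall (0 : Y) ε).toWeakSpace_closure (𝕜 := ℝ)
      rw [Metric.closure_closedBall] at h1
      have h2 : C = toWeakSpace ℝ Y '' Metric.closedBall (0 : Y) ε := rfl
      rw [h2, h1]
      exact isClosed_closure
    have hKC : IsClosed (K + C) := hCc.add_left_of_isCompact hK
    have hW : (K + C) ∈ 𝒰 := by
      refine Filter.mem_of_superset hSmem ?_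
      have himg : (toWeakSpaceCLM ℝ Y) '' (S '' B + Metric.closedBall (0 : Y) ε)
          = (toWeakSpaceCLM ℝ Y) '' (S '' B) + C := Set.image_add _
      rw [himg]
      exact closure_minimal (Set.add_subset_add subset_closure subset_rfl) hKC
    have hKne : K.Nonempty := by
      refine ⟨toWeakSpaceCLM ℝ Y (S 0), subset_closure ⟨S 0, ⟨0, ?_, rfl⟩, rfl⟩⟩
      simp [hBdef]
    obtain ⟨k₀, hk₀⟩ := hKne
    have hsel : ∀ w : WeakSpace ℝ Y, ∃ k, k ∈ K ∧ (w ∈ K + C → w - k ∈ C) := by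
      intro w
      by_cases h : w ∈ K + C
      · obtain ⟨k, hk, c, hc, hkc⟩ := Set.mem_add.1 h
        refine ⟨k, hk, fun _ => ?_⟩
        rw [← hkc]
        simpa using hc
      · exact ⟨k₀, hk₀, fun h' => absurd h' h⟩
    choose g hgK hgC using hsel
    have hKmem : K ∈ 𝒰.map g := mem_map.2 (Filter.univ_mem' hgK)
    obtain ⟨z, hzK, hz⟩ := hK.ultrafilter_le_nhds (𝒰.map g) (le_principal_iff.2 hKmem)
    refine ⟨(toWeakSpace ℝ Y).symm z, fun φ => ?_⟩
    have h1 : Tendsto (fun w => ev φ (g w)) ↑𝒰 (𝓝 (ev φ z)) := ((hevc φ).tendsto z).comp hz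
    have h2 : Tendsto (fun w => ev φ w - ev φ (g w)) ↑𝒰 (𝓝 (Λ φ - ev φ z)) := (hΛ φ).sub h1
    have h3 : ∀ᶠ w in ↑𝒰, |ev φ w - ev φ (g w)| ≤ ε * ‖φ‖ := by
      filter_upwards [hW] with w hw
      obtain ⟨c, hcball, hcw⟩ := hgC w hw
      have he1 : ev φ w - ev φ (g w) = ev φ (w - g w) := by
        simp [hevdef, map_sub]
      have he2 : ev φ (w - g w) = φ c := by rw [← hcw]; rfl
      rw [he1, he2]
      have : |φ c| ≤ ‖φ‖ * ‖c‖ := by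
        simpa [Real.norm_eq_abs] using φ.le_opNorm c
      calc |φ c| ≤ ‖φ‖ * ‖c‖ := this
      _ ≤ ‖φ‖ * ε := mul_le_mul_of_nonneg_left (mem_closedBall_zero_iff.1 hcball) (norm_nonneg φ)
      _ = ε * ‖φ‖ := mul_comm _ _
    have := le_of_tendsto h2.abs h3
    exact this
  -- build a Cauchy sequence converging to the weak limit
  have hpos : ∀ n : ℕ, (0 : ℝ) < 1 / (n + 1) := fun n => by positivity
  set yseq : ℕ → Y := fun n => (happrox (1 / (n + 1)) (hpos n)).choose with hyseqdef
  have hy : ∀ (n : ℕ) (φ : Y →L[ℝ] ℝ), |Λ φ - φ (yseq n)| ≤ (1 / (n + 1)) * ‖φ‖ :=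
    fun n => (happrox (1 / (n + 1)) (hpos n)).choose_spec
  have hdiff : ∀ n m : ℕ, ‖yseq n - yseq m‖ ≤ 1 / (n + 1) + 1 / (m + 1) := by
    intro n m
    refine NormedSpace.norm_le_dual_bound ℝ _ (by positivity) (fun φ => ?_)
    have h1 := hy n φ
    have h2 := hy m φ
    calc ‖φ (yseq n - yseq m)‖ = |(φ (yseq n) - Λ φ) + (Λ φ - φ (yseq m))| := by
          rw [map_sub, Real.norm_eq_abs]; ring_nf
    _ ≤ |φ (yseq n) - Λ φ| + |Λ φ - φ (yseq m)| := abs_add_le _ _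
    _ ≤ (1 / (n + 1)) * ‖φ‖ + (1 / (m + 1)) * ‖φ‖ := by
          rw [abs_sub_comm]; exact add_le_add h1 h2
    _ = (1 / (n + 1) + 1 / (m + 1)) * ‖φ‖ := by ring
  have hCauchy : CauchySeq yseq := by
    refine Metric.cauchySeq_iff'.2 fun ε hε => ?_
    obtain ⟨N, hN⟩ := exists_nat_one_div_lt (half_pos hε)
    refine ⟨N, fun n hn => ?_⟩
    have h1 : dist (yseq n) (yseq N) ≤ 1 / (n + 1) + 1 / (N + 1) := by
      rw [dist_eq_norm]; exact hdiff n N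
    have h2 : (1 : ℝ) / (n + 1) ≤ 1 / (N + 1) := by
      apply one_div_le_one_div_of_le (by positivity)
      exact_mod_cast add_le_add_left (Nat.cast_le.2 hn) 1
    have h3 : (1 : ℝ) / (N + 1) < ε / 2 := hN
    calc dist (yseq n) (yseq N) ≤ 1 / (n + 1) + 1 / (N + 1) := h1
    _ ≤ 1 / (N + 1) + 1 / (N + 1) := add_le_add_left h2 _
    _ < ε / 2 + ε / 2 := add_lt_add h3 h3
    _ = ε := add_halves ε
  obtain ⟨ylim, hylim⟩ := cauchySeq_tendsto_of_complete hCauchy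
  have hΛeq : ∀ φ : Y →L[ℝ] ℝ, Λ φ = φ ylim := by
    intro φ
    have ht1 : Tendsto (fun n => φ (yseq n)) atTop (𝓝 (φ ylim)) :=
      (φ.continuous.tendsto ylim).comp hylim
    have ht2 : Tendsto (fun n => φ (yseq n)) atTop (𝓝 (Λ φ)) := by
      rw [tendsto_iff_dist_tendsto_zero]
      have tg : Tendsto (fun n : ℕ => (1 / (n + 1 : ℝ)) * ‖φ‖) atTop (𝓝 0) := by
        simpa using tendsto_one_div_add_atTop_nhds_zero_nat.mul_const ‖φ‖
      refine squeeze_zero (fun n => dist_nonneg) (fun n => ?_) tg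
      rw [Real.dist_eq, abs_sub_comm]
      exact hy n φ
    exact tendsto_nhds_unique ht2 ht1
  have hinj : Function.Injective ((topDualPairing ℝ Y).flip) := by
    intro x y h
    have h' : ∀ φ : Y →L[ℝ] ℝ, φ ((toWeakSpace ℝ Y).symm x) = φ ((toWeakSpace ℝ Y).symm y) :=
      fun φ => LinearMap.congr_fun h φ
    have hz : (toWeakSpace ℝ Y).symm x = (toWeakSpace ℝ Y).symm y := by
      have := NormedSpace.eq_zero_of_forall_dual_eq_zero ℝ
        (x := (toWeakSpace ℝ Y).symm x - (toWeakSpace ℝ Y).symm y)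
        (fun φ => by rw [map_sub, h' φ, sub_self])
      exact sub_eq_zero.1 this
    exact (toWeakSpace ℝ Y).symm.injective hz
  have hle : Tendsto (fun x : WeakSpace ℝ Y => x) ↑𝒰 (𝓝 (toWeakSpace ℝ Y ylim)) := by
    refine (WeakBilin.tendsto_iff_forall_eval_tendsto (f := fun x : WeakSpace ℝ Y => x) _ hinj).2 ?_
    intro φ
    have := hΛ φ
    rw [hΛeq φ] at this
    exact this
  have hle' : ↑𝒰 ≤ 𝓝 (toWeakSpace ℝ Y ylim) := by
    exact Filter.tendsto_id'.1 hle
  refine ⟨toWeakSpace ℝ Y ylim, ?_, hle'⟩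
  have hcp : ClusterPt (toWeakSpace ℝ Y ylim) (𝓟 (closure ((toWeakSpaceCLM ℝ Y) '' A))) := by
    refine Filter.neBot_of_le (f := ↑𝒰) (le_inf hle' h𝒰)
  have := mem_closure_iff_clusterPt.2 hcp
  rwa [closure_closure] at this
end

section
/- Let S_n : c₀ → c₀ be defined by S_n x = x_n e_1, with adjoints S_n' : ℓ¹ → ℓ¹. Then the set {S_n' : n ∈ ℕ} is not collectively weakly compact; indeed ⋃_n S_n'(B_{ℓ¹}) contains the standard unit vector basis {e_n} of ℓ¹, which is not relatively weakly compact. -/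
open Filter Topology Metric Set

instance : Fact ((1 : ENNReal) ≤ 1) := ⟨le_rfl⟩

/-! ### Auxiliary functionals on `ℓ¹` -/

/-- Abbreviation for `ℓ¹`. -/
abbrev E : Type := lp (fun _ : ℕ => ℝ) 1

section Aux

lemma summable_of_mem_lp_one (f : E) : Summable fun k => f k := by
  have h : Summable fun k => ‖f k‖ := by
    have := lp.memℓp f
    rw [memℓp_gen_iff (by norm_num : (0:ℝ) < (1 : ENNReal).toReal)] at this
    simpa using this
  exact h.of_norm

/-- The summation functional on `ℓ¹`. -/
noncomputable def sumCLM : E →L[ℝ] ℝ :=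
  LinearMap.mkContinuous
    { toFun := fun f => ∑' k, f k
      map_add' := fun f g => by
        simp only [lp.coeFn_add, Pi.add_apply]
        exact Summable.tsum_add (summable_of_mem_lp_one f) (summable_of_mem_lp_one g)
      map_smul' := fun c f => by
        simp only [lp.coeFn_smul, Pi.smul_apply, smul_eq_mul, RingHom.id_apply]
        exact tsum_mul_left }
    1 (fun f => by
      have h1 : ‖∑' k, f k‖ ≤ ∑' k, ‖f k‖ := by
        apply norm_tsum_le_tsum_norm
        have := lp.memℓp f
        rw [memℓp_gen_iff (by norm_num : (0:ℝ) < (1 : ENNReal).toReal)] at this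
        simpa using this
      have h2 : ∑' k, ‖f k‖ = ‖f‖ := by
        rw [lp.norm_eq_tsum_rpow (by norm_num : (0:ℝ) < (1 : ENNReal).toReal)]
        simp
      calc ‖∑' k, f k‖ ≤ ∑' k, ‖f k‖ := h1
        _ = ‖f‖ := h2
        _ ≤ 1 * ‖f‖ := by simp)

@[simp] lemma sumCLM_apply (f : E) : sumCLM f = ∑' k, f k := rfl

/-- The `k`-th coordinate functional on `ℓ¹`. -/
noncomputable def coordCLM (k : ℕ) : E →L[ℝ] ℝ :=
  LinearMap.mkContinuous
    { toFun := fun f => f k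
      map_add' := fun f g => by simp [lp.coeFn_add]
      map_smul' := fun c f => by simp [lp.coeFn_smul] }
    1 (fun f => show ‖f k‖ ≤ 1 * ‖f‖ by simpa using lp.norm_apply_le_norm one_ne_zero f k)

@[simp] lemma coordCLM_apply (k : ℕ) (f : E) : coordCLM k f = f k := rfl

lemma mapClusterPt_unique {α : Type*} {u : α → ℝ} {F : Filter α} [F.NeBot] {c a : ℝ}
    (h : MapClusterPt c F u) (ha : Tendsto u F (𝓝 a)) : c = a := by
  have : (𝓝 c ⊓ 𝓝 a).NeBot := h.clusterPt.mono ha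
  exact t2_iff_nhds.mp inferInstance this

end Aux

/-- The adjoints `S_n' f = f_1 e_n` on `ℓ¹` of `S_n x = x_n e_1` on `c₀` do not form a
collectively weakly compact set: the union of the images of the unit ball contains the
standard unit vector basis of `ℓ¹`, and is not relatively weakly compact. -/
theorem adjoints_not_collectivelyWeaklyCompact
    (S' : ℕ → (lp (fun _ : ℕ => ℝ) 1 →L[ℝ] lp (fun _ : ℕ => ℝ) 1))
    (hS : ∀ n (f : lp (fun _ : ℕ => ℝ) 1), S' n f = f 0 • lp.single 1 n (1 : ℝ)) :
    (∀ n, lp.single 1 n (1 : ℝ) ∈ ⋃ m, S' m '' closedBall 0 1) ∧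
      ¬ RelWeaklyCompact (⋃ n, S' n '' closedBall 0 1) := by
  have e0mem : lp.single 1 0 (1 : ℝ) ∈ closedBall (0 : E) 1 := by
    rw [mem_closedBall, dist_zero_right]
    have := lp.norm_single (E := fun _ : ℕ => ℝ) (p := 1) (by norm_num)
      0 (1 : ℝ)
    rw [this]
    simp
  have hmem : ∀ n, lp.single 1 n (1 : ℝ) ∈ ⋃ m, S' m '' closedBall (0 : E) 1 := by
    intro n
    refine mem_iUnion.2 ⟨n, ⟨lp.single 1 0 1, e0mem, ?_⟩⟩
    rw [hS]
    simp [lp.single_apply_self]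
  refine ⟨hmem, ?_⟩
  intro hcomp
  set e : ℕ → E := fun n => lp.single 1 n (1 : ℝ) with he
  set u : ℕ → WeakSpace ℝ E := fun n => toWeakSpaceCLM ℝ E (e n) with hu
  have hle : map u atTop ≤ 𝓟 (closure ((toWeakSpaceCLM ℝ E) '' ⋃ n, S' n '' closedBall 0 1)) := by
    rw [le_principal_iff, mem_map]
    exact Eventually.of_forall fun n =>
      subset_closure (mem_image_of_mem _ (hmem n))
  obtain ⟨x, -, hx⟩ := hcomp hle
  have hx' : MapClusterPt x atTop u := hx
  -- cluster point facts through continuous functionals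
  have key : ∀ (φ : E →L[ℝ] ℝ) (a : ℝ), Tendsto (fun n => φ (e n)) atTop (𝓝 a) →
      φ ((toWeakSpace ℝ E).symm x) = a := by
    intro φ a ha
    have hcont' : Continuous fun z : WeakSpace ℝ E => φ ((toWeakSpace ℝ E).symm z) :=
      WeakBilin.eval_continuous ((topDualPairing ℝ _).flip) φ
    have h := hx'.continuousAt_comp hcont'.continuousAt
    exact mapClusterPt_unique h (ha.congr fun n => rfl)
  -- coordinates of the cluster point are all zero
  have hcoord : ∀ k, ((toWeakSpace ℝ E).symm x : ∀ _ : ℕ, ℝ) k = 0 := by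
    intro k
    have htend : Tendsto (fun n => coordCLM k (e n)) atTop (𝓝 0) := by
      have hev : (fun n => coordCLM k (e n)) =ᶠ[atTop] fun _ => (0 : ℝ) := by
        filter_upwards [eventually_gt_atTop k] with n hn
        simp only [coordCLM_apply, he]
        exact lp.single_apply_ne (E := fun _ : ℕ => ℝ) 1 n (1 : ℝ) (Nat.ne_of_lt hn)
      exact Tendsto.congr' hev.symm tendsto_const_nhds
    simpa using key (coordCLM k) 0 htend
  -- but the sum functional at the cluster point is 1
  have hsum : sumCLM ((toWeakSpace ℝ E).symm x) = 1 := by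
    refine key sumCLM 1 ?_
    have hval : ∀ n, sumCLM (e n) = 1 := by
      intro n
      rw [sumCLM_apply]
      have : ∀ k, (e n : ∀ _ : ℕ, ℝ) k = if k = n then (1:ℝ) else 0 := by
        intro k
        by_cases h : k = n
        · subst h; simp [he, lp.single_apply_self]
        · simp [he, lp.single_apply_ne (E := fun _ : ℕ => ℝ) 1 n (1 : ℝ) h, h]
      rw [tsum_congr this]
      exact tsum_ite_eq n (fun _ => (1 : ℝ))
    rw [show (fun n => sumCLM (e n)) = fun _ => (1:ℝ) from funext hval]
    exact tendsto_const_nhds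
  rw [sumCLM_apply, tsum_congr hcoord, tsum_zero] at hsum
  norm_num at hsum
end

section
/- Let F be a Banach lattice whose order continuous part F^a is infinite-dimensional, and let (u_n) be a disjoint normalized sequence in F^a_+. Define rank one operators T_n : ℓ^∞ → F by T_n x = x_n u_n. Then each T_n is L-weakly compact, but the set {T_n : n ∈ ℕ} is not collectively limitedly L-weakly compact: for the limited set A = {e_n} ⊂ ℓ^∞, the set ⋃_n T_n(A) = {0} ∪ {u_n} is not L-weakly compact. -/
open Filter Topology Metric Set

instance : Fact ((1 : ENNReal) ≤ ⊤) := ⟨le_top⟩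

/-- Membership in the order continuous part `F^a` of a Banach lattice: every disjoint
sequence in `[0, |x|]` is norm null. -/
def MemOrderContinuousPart {F : Type*} [NormedAddCommGroup F] [Lattice F] [HasSolidNorm F]
    [IsOrderedAddMonoid F] (x : F) : Prop :=
  ∀ y : ℕ → F, (∀ n, 0 ≤ y n ∧ y n ≤ |x|) → DisjSeq y →
    Tendsto (fun n => ‖y n‖) atTop (𝓝 0)

section Aux
variable {F : Type*} [NormedAddCommGroup F] [Lattice F] [HasSolidNorm F]
    [IsOrderedAddMonoid F]

lemma nonneg_of_two_pow_nsmul_nonneg (k : ℕ) :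
    ∀ x : F, 0 ≤ (2 ^ k) • x → 0 ≤ x := by
  induction k with
  | zero => intro x h; simpa using h
  | succ k ih =>
    intro x h
    rw [pow_succ, mul_smul] at h
    have h2 : 0 ≤ (2 : ℕ) • x := ih _ h
    exact nsmul_two_semiclosed (by simpa using h2)

variable [NormedSpace ℝ F]

lemma real_smul_nonneg' {t : ℝ} (ht : 0 ≤ t) {v : F} (hv : 0 ≤ v) : 0 ≤ t • v := by
  have hclosed : IsClosed {s : ℝ | 0 ≤ s • v} :=
    isClosed_nonneg.preimage (continuous_id.smul continuous_const)
  have key : ∀ m k : ℕ, 0 ≤ ((m : ℝ) / 2 ^ k) • v := by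
    intro m k
    apply nonneg_of_two_pow_nsmul_nonneg k
    have h1 : (2 ^ k : ℕ) • (((m : ℝ) / 2 ^ k) • v) = (m : ℕ) • v := by
      rw [← Nat.cast_smul_eq_nsmul ℝ, ← Nat.cast_smul_eq_nsmul ℝ, smul_smul]
      congr 1
      push_cast
      field_simp
    rw [h1]
    exact nsmul_nonneg hv m
  have htend : Tendsto (fun k : ℕ => ((⌊t * 2 ^ k⌋₊ : ℝ) / 2 ^ k)) atTop (𝓝 t) := by
    have hlow : Tendsto (fun k : ℕ => t - (1/2 : ℝ) ^ k) atTop (𝓝 t) := by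
      have := tendsto_pow_atTop_nhds_zero_of_lt_one (by norm_num : (0:ℝ) ≤ 1/2)
        (by norm_num : (1/2 : ℝ) < 1)
      simpa using tendsto_const_nhds.sub this
    refine tendsto_of_tendsto_of_tendsto_of_le_of_le hlow tendsto_const_nhds ?_ ?_
    · intro k
      have hpos : (0:ℝ) < 2 ^ k := by positivity
      have hfl : t * 2 ^ k - 1 < (⌊t * 2 ^ k⌋₊ : ℝ) := Nat.sub_one_lt_floor _
      show t - (1/2 : ℝ) ^ k ≤ (⌊t * 2 ^ k⌋₊ : ℝ) / 2 ^ k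
      have h2 : (1/2 : ℝ) ^ k = 1 / 2 ^ k := by
        rw [div_pow, one_pow]
      rw [h2, le_div_iff₀ hpos]
      have h3 : (1 / 2 ^ k : ℝ) * 2 ^ k = 1 := by field_simp
      nlinarith [hfl, h3]
    · intro k
      have hpos : (0:ℝ) < 2 ^ k := by positivity
      show (⌊t * 2 ^ k⌋₊ : ℝ) / 2 ^ k ≤ t
      rw [div_le_iff₀ hpos]
      exact Nat.floor_le (by positivity)
  exact hclosed.mem_of_tendsto htend (Eventually.of_forall fun k => key _ k)

lemma abs_real_smul_le {c : ℝ} (hc : |c| ≤ 1) {v : F} (hv : 0 ≤ v) : |c • v| ≤ v := by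
  obtain ⟨h1, h2⟩ := abs_le.mp hc
  rw [abs_le']
  constructor
  · have h := real_smul_nonneg' (by linarith : (0:ℝ) ≤ 1 - c) hv
    rw [sub_smul, one_smul] at h
    exact sub_nonneg.mp h
  · have h := real_smul_nonneg' (by linarith : (0:ℝ) ≤ 1 + c) hv
    rw [add_smul, one_smul] at h
    rw [← sub_nonneg, sub_neg_eq_add]
    exact h

end Aux

/-- For a disjoint normalized sequence `(u_n)` in `F^a_+`, the rank one operators
`T_n x = x_n u_n` from `ℓ^∞` to `F` are each L-weakly compact, but the set
`{T_n}` is not collectively limitedly L-weakly compact: the image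
`⋃ₙ T_n(A) = {0} ∪ {u_n}` of the (limited) set `A = {e_n}` is not L-weakly compact. -/
theorem rankOne_Lwc_not_collectively_lLwc {F : Type*} [NormedAddCommGroup F] [Lattice F] [HasSolidNorm F]
    [IsOrderedAddMonoid F]
    [NormedSpace ℝ F] [CompleteSpace F]
    (u : ℕ → F) (hpos : ∀ n, 0 ≤ u n) (hnorm : ∀ n, ‖u n‖ = 1) (hdisj : DisjSeq u)
    (hu : ∀ n, MemOrderContinuousPart (u n))
    (T : ℕ → (lp (fun _ : ℕ => ℝ) ⊤ →L[ℝ] F))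
    (hT : ∀ n (x : lp (fun _ : ℕ => ℝ) ⊤), T n x = x n • u n) :
    (∀ n, IsLwcSet (T n '' closedBall 0 1)) ∧
      (⋃ n, T n '' ((fun m : ℕ => lp.single ⊤ m (1 : ℝ)) '' Set.univ)) =
        ({0} ∪ Set.range u) ∧
      ¬ IsLwcSet ({0} ∪ Set.range u) := by
  refine ⟨?_, ?_, ?_⟩
  · -- each T n is L-weakly compact
    intro n
    constructor
    · -- boundedness
      refine (isBounded_closedBall (x := (0:F)) (r := ‖T n‖)).subset ?_
      rintro y ⟨b, hb, rfl⟩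
      rw [mem_closedBall_zero_iff] at hb ⊢
      calc ‖T n b‖ ≤ ‖T n‖ * ‖b‖ := (T n).le_opNorm b
        _ ≤ ‖T n‖ * 1 := by
            exact mul_le_mul_of_nonneg_left hb (norm_nonneg _)
        _ = ‖T n‖ := mul_one _
    · intro x hx hdx
      -- every element of the solid hull is dominated by u n
      have hdom : ∀ k, |x k| ≤ u n := by
        intro k
        obtain ⟨a, ⟨b, hb, rfl⟩, hle⟩ := hx k
        refine hle.trans ?_
        rw [hT n b]
        refine abs_real_smul_le ?_ (hpos n)
        have h1 : ‖b n‖ ≤ ‖b‖ := lp.norm_apply_le_norm ENNReal.top_ne_zero b n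
        have h2 : ‖b‖ ≤ 1 := by rwa [mem_closedBall_zero_iff] at hb
        calc |b n| = ‖b n‖ := (Real.norm_eq_abs _).symm
          _ ≤ 1 := h1.trans h2
      have key := hu n (fun k => |x k|)
        (fun k => ⟨abs_nonneg _, (hdom k).trans_eq (abs_of_nonneg (hpos n)).symm⟩)
        (fun i j hij => by rw [abs_abs, abs_abs]; exact hdx i j hij)
      simpa [norm_abs_eq_norm] using key
  · -- the union of the images equals {0} ∪ range u
    ext y
    simp only [Set.image_univ, Set.mem_iUnion, Set.mem_image, Set.mem_range,
      Set.mem_union, Set.mem_singleton_iff]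
    constructor
    · rintro ⟨n, _, ⟨m, rfl⟩, rfl⟩
      rw [hT]
      by_cases h : n = m
      · subst h
        rw [lp.single_apply_self]
        right
        exact ⟨n, (one_smul ℝ (u n)).symm ▸ rfl⟩
      · rw [lp.single_apply_ne ⊤ m 1 h, zero_smul]
        left; rfl
    · rintro (rfl | ⟨n, rfl⟩)
      · refine ⟨0, _, ⟨1, rfl⟩, ?_⟩
        rw [hT, lp.single_apply_ne ⊤ 1 1 (by norm_num), zero_smul]
      · refine ⟨n, _, ⟨n, rfl⟩, ?_⟩
        rw [hT, lp.single_apply_self, one_smul]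
  · -- {0} ∪ range u is not L-weakly compact
    rintro ⟨-, h⟩
    have hx : ∀ k, u k ∈ solidHull ({0} ∪ Set.range u) :=
      fun k => ⟨u k, Or.inr ⟨k, rfl⟩, le_refl _⟩
    have := h u hx hdisj
    have h1 : Tendsto (fun _ : ℕ => (1:ℝ)) atTop (𝓝 0) := by
      simp only [hnorm] at this
      exact this
    have := tendsto_nhds_unique h1 tendsto_const_nhds
    norm_num at this
end

section
/- Let E, F be Banach lattices, 𝒮 a set of positive operators E → F, and 𝒯 a collectively L-weakly compact set of positive operators E → F dominating 𝒮 (for each S ∈ 𝒮 there is T ∈ 𝒯 with 0 ≤ S ≤ T). Then 𝒮 is collectively L-weakly compact. -/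
open Filter Topology Metric Set

/-!
A positive operator satisfies `|S y| ≤ S |y|`, so for `0 ≤ S ≤ T` and `‖y‖ ≤ 1` we get
`|S y| ≤ T |y| = |T |y||` with `‖ |y| ‖ ≤ 1`. Hence the image of the unit ball under `𝒮` lies in
the solid hull of its image under `𝒯`, and L-weak compactness passes to such sets.
-/

theorem monotone_of_map_nonneg {E F G : Type*} [AddCommGroup E] [PartialOrder E]
    [IsOrderedAddMonoid E] [AddCommGroup F] [PartialOrder F] [IsOrderedAddMonoid F]
    [FunLike G E F] [AddMonoidHomClass G E F] (S : G) (hS : ∀ x, 0 ≤ x → 0 ≤ S x) :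
    Monotone S := by
  intro a b hab
  simpa only [map_sub, sub_nonneg] using hS (b - a) (sub_nonneg.2 hab)

theorem abs_map_le_map_abs {E F G : Type*} [AddGroup E] [Lattice E] [AddGroup F] [Lattice F]
    [FunLike G E F] [AddMonoidHomClass G E F] {S : G} (hS : Monotone S) (y : E) :
    |S y| ≤ S |y| :=
  abs_le'.2 ⟨hS (le_abs_self y), by simpa only [map_neg] using hS (neg_le_abs y)⟩

section SolidHull

variable {E : Type*} [NormedAddCommGroup E] [Lattice E] [HasSolidNorm E] [IsOrderedAddMonoid E]
  {A B : Set E}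

theorem solidHull_subset_of_subset_solidHull (h : A ⊆ solidHull B) : solidHull A ⊆ solidHull B := by
  rintro x ⟨a, ha, hxa⟩
  obtain ⟨b, hb, hab⟩ := h ha
  exact ⟨b, hb, hxa.trans hab⟩

theorem Bornology.IsBounded.solidHull (hB : Bornology.IsBounded B) :
    Bornology.IsBounded (solidHull B) := by
  obtain ⟨C, hC⟩ := isBounded_iff_forall_norm_le.1 hB
  refine isBounded_iff_forall_norm_le.2 ⟨C, ?_⟩
  rintro x ⟨b, hb, hxb⟩
  exact (HasSolidNorm.solid hxb).trans (hC b hb)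

theorem IsLwcSet.of_subset_solidHull (hB : IsLwcSet B) (h : A ⊆ solidHull B) : IsLwcSet A :=
  ⟨hB.1.solidHull.subset h, fun x hx hdisj =>
    hB.2 x (fun n => solidHull_subset_of_subset_solidHull h (hx n)) hdisj⟩

end SolidHull

/-- The domination property for collectively L-weakly compact sets: if a set `𝒮` of
positive operators is dominated by a collectively L-weakly compact set `𝒯` of positive
operators, then `𝒮` is collectively L-weakly compact. -/
theorem collectivelyLwc_of_dominated {E F : Type*}
    [NormedAddCommGroup E] [Lattice E] [HasSolidNorm E] [IsOrderedAddMonoid E] [NormedSpace ℝ E] [CompleteSpace E]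
    [NormedAddCommGroup F] [Lattice F] [HasSolidNorm F] [IsOrderedAddMonoid F] [NormedSpace ℝ F] [CompleteSpace F]
    (𝒮 𝒯 : Set (E →L[ℝ] F))
    (hSpos : ∀ S ∈ 𝒮, ∀ x : E, 0 ≤ x → 0 ≤ S x)
    (hTpos : ∀ T ∈ 𝒯, ∀ x : E, 0 ≤ x → 0 ≤ T x)
    (hdom : ∀ S ∈ 𝒮, ∃ T ∈ 𝒯, ∀ x : E, 0 ≤ x → S x ≤ T x)
    (hT : IsLwcSet (⋃ T ∈ 𝒯, T '' closedBall (0 : E) 1)) :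
    IsLwcSet (⋃ S ∈ 𝒮, S '' closedBall (0 : E) 1) := by
  refine hT.of_subset_solidHull (iUnion₂_subset fun S hS => ?_)
  rintro _ ⟨y, hy, rfl⟩
  obtain ⟨T, hT𝒯, hST⟩ := hdom S hS
  have hy' : |y| ∈ closedBall (0 : E) 1 := by
    simpa only [mem_closedBall_zero_iff, norm_abs_eq_norm] using hy
  refine ⟨T |y|, mem_iUnion₂_of_mem hT𝒯 ⟨|y|, hy', rfl⟩, ?_⟩
  calc |S y| ≤ S |y| := abs_map_le_map_abs (monotone_of_map_nonneg S (hSpos S hS)) y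
    _ ≤ T |y| := hST _ (abs_nonneg y)
    _ = |T (|y|)| := (abs_of_nonneg (hTpos T hT𝒯 _ (abs_nonneg y))).symm
end

section
/- Let E, F be Banach lattices, T : E → F a positive operator such that T(A) is norm totally bounded for a set A ⊆ E_+, and 𝒮 a set of positive operators each dominated by T (0 ≤ S ≤ T for all S ∈ 𝒮). Then for each ε > 0 there exists u ∈ F_+ such that sup_{S∈𝒮} ‖(Sx − u)^+‖ ≤ ε for all x ∈ A. -/
open Filter Topology Metric Set

/-!
Cover `T(A)` by finitely many `ε`-balls and let `u ≥ 0` dominate their centres. For `x ∈ A`, pick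
a centre `y` with `‖Tx - y‖ < ε`; then `Sx - u ≤ Tx - y`, so `(Sx - u)⁺ ≤ |Tx - y|` and solidity of
the norm gives `‖(Sx - u)⁺‖ ≤ ε`, uniformly in `S`.
-/

section NormedLattice

variable {α : Type*} [NormedAddCommGroup α] [Lattice α] [HasSolidNorm α] [IsOrderedAddMonoid α]

theorem norm_sup_zero_le_norm_of_le {a b : α} (h : a ≤ b) : ‖a ⊔ 0‖ ≤ ‖b‖ := by
  refine HasSolidNorm.solid ?_
  rw [abs_of_nonneg le_sup_right]
  exact sup_le (h.trans (le_abs_self b)) (abs_nonneg b)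

theorem TotallyBounded.exists_nonneg_forall_norm_sub_sup_zero_le {B : Set α}
    (hB : TotallyBounded B) {ε : ℝ} (hε : 0 < ε) :
    ∃ u : α, 0 ≤ u ∧ ∀ b ∈ B, ∀ z ≤ b, ‖(z - u) ⊔ 0‖ ≤ ε := by
  obtain ⟨t, ht, hBt⟩ := totallyBounded_iff.mp hB ε hε
  obtain ⟨v, hv⟩ := ht.bddAbove
  refine ⟨v ⊔ 0, le_sup_right, fun b hb z hzb => ?_⟩
  obtain ⟨y, hyt, hby⟩ := mem_iUnion₂.mp (hBt hb)
  have hzy : z - (v ⊔ 0) ≤ b - y := sub_le_sub hzb ((hv hyt).trans le_sup_left)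
  calc ‖(z - (v ⊔ 0)) ⊔ 0‖ ≤ ‖b - y‖ := norm_sup_zero_le_norm_of_le hzy
    _ ≤ ε := (mem_ball_iff_norm.mp hby).le

end NormedLattice

theorem collective_domination_approximation_general {E F : Type*}
    [NormedAddCommGroup E] [Lattice E] [NormedSpace ℝ E]
    [NormedAddCommGroup F] [Lattice F] [HasSolidNorm F] [IsOrderedAddMonoid F] [NormedSpace ℝ F]
    (T : E →L[ℝ] F)
    (A : Set E) (hA : ∀ x ∈ A, 0 ≤ x) (hTA : TotallyBounded (T '' A))
    (𝒮 : Set (E →L[ℝ] F))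
    (hdom : ∀ S ∈ 𝒮, ∀ x : E, 0 ≤ x → S x ≤ T x) :
    ∀ ε > (0 : ℝ), ∃ u : F, 0 ≤ u ∧ ∀ S ∈ 𝒮, ∀ x ∈ A, ‖(S x - u) ⊔ 0‖ ≤ ε := by
  intro ε hε
  obtain ⟨u, hu, happrox⟩ := hTA.exists_nonneg_forall_norm_sub_sup_zero_le hε
  exact ⟨u, hu, fun S hS x hx =>
    happrox (T x) (mem_image_of_mem T hx) (S x) (hdom S hS x (hA x hx))⟩

/-- Collective Aliprantis–Burkinshaw approximation lemma: if every `S ∈ 𝒮` satisfies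
`0 ≤ S ≤ T` and `T(A)` is norm totally bounded for `A ⊆ E₊`, then for each `ε > 0`
there is `u ∈ F₊` with `‖(Sx - u)⁺‖ ≤ ε` for all `S ∈ 𝒮` and `x ∈ A`. -/
theorem collective_domination_approximation {E F : Type*}
    [NormedAddCommGroup E] [Lattice E] [HasSolidNorm E] [IsOrderedAddMonoid E] [NormedSpace ℝ E] [CompleteSpace E]
    [NormedAddCommGroup F] [Lattice F] [HasSolidNorm F] [IsOrderedAddMonoid F] [NormedSpace ℝ F] [CompleteSpace F]
    (T : E →L[ℝ] F) (hTpos : ∀ x : E, 0 ≤ x → 0 ≤ T x)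
    (A : Set E) (hA : ∀ x ∈ A, 0 ≤ x) (hTA : TotallyBounded (T '' A))
    (𝒮 : Set (E →L[ℝ] F))
    (hSpos : ∀ S ∈ 𝒮, ∀ x : E, 0 ≤ x → 0 ≤ S x)
    (hdom : ∀ S ∈ 𝒮, ∀ x : E, 0 ≤ x → S x ≤ T x) :
    ∀ ε > (0 : ℝ), ∃ u : F, 0 ≤ u ∧ ∀ S ∈ 𝒮, ∀ x ∈ A, ‖(S x - u) ⊔ 0‖ ≤ ε :=
  collective_domination_approximation_general T A hA hTA 𝒮 hdom
end
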